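/- arXiv:math/0701384 — 2 statements merged into one kernel-verified Lean document; each statement's English description precedes it below -/
import Mathlib

section
/- Let A, B, C ∈ SL(2,ℂ). Then trace(A·S·B·S⁻¹) = trace(A·B) for every S ∈ SL(2,ℂ) commuting with C if and only if one of the following holds: (a) C = I or C = −I, and (A = I or A = −I or B = I or B = −I); or (b) C ≠ I, C ≠ −I, and either A commutes with C, or B commutes with C, or there is a nonzero vector v ∈ ℂ² that is simultaneously an eigenvector of A, of B, and of C. -/
open Matrix MatrixGroups
namespace Stmt0Aux
noncomputable section

abbrev M2 := Matrix (Fin 2) (Fin 2) ℂ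
def Kt (t : ℂ) : SL(2,ℂ) := ⟨!![0,-1;1,t], by simp [Matrix.det_fin_two_of]⟩
@[simp] lemma Kt_coe (t : ℂ) : ((Kt t : SL(2,ℂ)) : M2) = !![0,-1;1,t] := rfl
lemma detSL (S : SL(2,ℂ)) :
    (S : M2) 0 0 * (S : M2) 1 1 - (S : M2) 0 1 * (S : M2) 1 0 = 1 := by
  have := S.2; rwa [Matrix.det_fin_two] at this
lemma comm_companion {t : ℂ} {S : M2} (hS : S * !![0,-1;1,t] = !![0,-1;1,t] * S) :
    S = !![S 0 0, -(S 1 0); S 1 0, S 0 0 + S 1 0 * t] := by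
  have e00 := congrFun (congrFun hS 0) 0
  have e01 := congrFun (congrFun hS 0) 1
  simp [Matrix.mul_apply, Fin.sum_univ_two] at e00 e01
  have h01 : S 0 1 = -(S 1 0) := by linear_combination e00
  have h11 : S 1 1 = S 0 0 + S 1 0 * t := by linear_combination -t * e00 + e01
  conv_lhs => rw [Matrix.eta_fin_two S, h01, h11]
def uu (A : SL(2,ℂ)) : ℂ := (A : M2) 0 1 + (A : M2) 1 0
def ww (t : ℂ) (A : SL(2,ℂ)) : ℂ := (A : M2) 1 1 - (A : M2) 0 0 + (A : M2) 0 1 * t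
lemma trace_conj_eq {t x y : ℂ} (A B S : SL(2,ℂ)) (hS : (S : M2) = !![x,-y;y,x+y*t]) :
    Matrix.trace ((A * S * B * S⁻¹ : SL(2,ℂ)) : M2) =
      Matrix.trace ((A * B : SL(2,ℂ)) : M2)
      + x*y*(uu B * ww t A - uu A * ww t B)
      + y*y*(t*(uu B * ww t A) - uu A * uu B - ww t A * ww t B) := by
  have hdet := detSL S
  rw [hS] at hdet
  simp only [Matrix.of_apply, Matrix.cons_val', Matrix.cons_val_zero, Matrix.cons_val_one,
    Matrix.head_cons, Matrix.empty_val', Matrix.cons_val_fin_one, Matrix.head_fin_const] at hdet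
  simp only [Matrix.SpecialLinearGroup.coe_mul, Matrix.SpecialLinearGroup.coe_inv,
    Matrix.adjugate_fin_two, Matrix.trace_fin_two, Matrix.mul_apply, Fin.sum_univ_two, hS,
    Matrix.of_apply, Matrix.cons_val', Matrix.cons_val_zero, Matrix.cons_val_one,
    Matrix.head_cons, Matrix.empty_val', Matrix.cons_val_fin_one, Matrix.head_fin_const]
  unfold uu ww
  linear_combination ((A : M2) 0 0 * (B : M2) 0 0 + (A : M2) 0 1 * (B : M2) 1 0 +
    (A : M2) 1 0 * (B : M2) 0 1 + (A : M2) 1 1 * (B : M2) 1 1) * hdet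

-- new in chunk 3
lemma Sxy_comm {t x y : ℂ} (S : SL(2,ℂ)) (hS : (S : M2) = !![x,-y;y,x+y*t]) :
    S * Kt t = Kt t * S := by
  apply Subtype.ext
  show ((S : M2) * (Kt t : M2)) = ((Kt t : M2) * (S : M2))
  rw [hS, Kt_coe]
  ext i j
  fin_cases i <;> fin_cases j <;> simp [Matrix.mul_apply, Fin.sum_univ_two] <;> ring

lemma companion_iff_E (t : ℂ) (A B : SL(2,ℂ)) :
    (∀ S : SL(2,ℂ), S * Kt t = Kt t * S →
      Matrix.trace ((A * S * B * S⁻¹ : SL(2,ℂ)) : M2) =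
        Matrix.trace ((A * B : SL(2,ℂ)) : M2)) ↔
    (uu B * ww t A - uu A * ww t B = 0 ∧
      t * (uu B * ww t A) - uu A * uu B - ww t A * ww t B = 0) := by
  constructor
  · intro H
    have hKt : ((Kt t : SL(2,ℂ)) : M2) = !![(0:ℂ), -(1:ℂ); 1, 0 + 1 * t] := by
      rw [Kt_coe]; norm_num
    have hE2 : t * (uu B * ww t A) - uu A * uu B - ww t A * ww t B = 0 := by
      have h := H (Kt t) rfl
      rw [trace_conj_eq A B (Kt t) hKt] at h
      linear_combination h
    refine ⟨?_, hE2⟩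
    by_cases ht : t = -2
    · subst ht
      have hdetS : Matrix.det !![-(1/2:ℂ), -(1/2); (1/2), -(1/2)+(1/2)*(-2)] = 1 := by
        rw [Matrix.det_fin_two_of]; norm_num
      set S : SL(2,ℂ) := ⟨!![-(1/2:ℂ), -(1/2); (1/2), -(1/2)+(1/2)*(-2)], hdetS⟩ with hSdef
      have hSc : (S : M2) = !![-(1/2:ℂ), -(1/2); (1/2), -(1/2)+(1/2)*(-2)] := rfl
      have h := H S (Sxy_comm S hSc)
      rw [trace_conj_eq A B S hSc] at h
      linear_combination -4 * h + hE2
    · have h2t : (2 + t) ≠ 0 := fun h => ht (by linear_combination h)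
      obtain ⟨y, hy⟩ := IsAlgClosed.exists_pow_nat_eq ((2+t)⁻¹ : ℂ) (by norm_num : 0 < 2)
      have hy1 : y ^ 2 * (2 + t) = 1 := by rw [hy]; field_simp
      have hyne : y ≠ 0 := by
        intro h; rw [h] at hy1; simp at hy1
      have hdetS : Matrix.det !![y, -y; y, y + y*t] = 1 := by
        rw [Matrix.det_fin_two_of]; linear_combination hy1
      set S : SL(2,ℂ) := ⟨!![y, -y; y, y + y*t], hdetS⟩ with hSdef
      have hSc : (S : M2) = !![y, -y; y, y + y*t] := rfl
      have h := H S (Sxy_comm S hSc)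
      rw [trace_conj_eq A B S hSc] at h
      have hz : y * y * ((uu B * ww t A - uu A * ww t B) +
          (t * (uu B * ww t A) - uu A * uu B - ww t A * ww t B)) = 0 := by
        linear_combination h
      rcases mul_eq_zero.1 hz with h' | h'
      · exact absurd (mul_self_eq_zero.1 h') hyne
      · linear_combination h' - hE2
  · rintro ⟨h1, h2⟩ S hS
    have hm : (S : M2) * !![0,-1;1,t] = !![0,-1;1,t] * (S : M2) := by
      have := congrArg (Subtype.val) hS
      simpa [Matrix.SpecialLinearGroup.coe_mul] using this
    have hSm := comm_companion hm
    rw [trace_conj_eq A B S hSm, h1, h2]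
    ring
lemma key {t u w u' w' : ℂ} (h1 : u' * w - u * w' = 0)
    (h2 : t * (u' * w) - u * u' - w * w' = 0)
    (hA : ¬(u = 0 ∧ w = 0)) (hB : ¬(u' = 0 ∧ w' = 0)) :
    ∃ γ : ℂ, γ * γ = t * γ - 1 ∧ u = γ * w ∧ u' = γ * w' := by
  have hw : w ≠ 0 := by
    rintro rfl
    have hu : u ≠ 0 := fun h => hA ⟨h, rfl⟩
    have hw' : w' = 0 := by
      have : u * w' = 0 := by linear_combination -h1
      rcases mul_eq_zero.1 this with h | h
      · exact absurd h hu
      · exact h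
    have hu' : u' = 0 := by
      have : u * u' = 0 := by linear_combination -h2
      rcases mul_eq_zero.1 this with h | h
      · exact absurd h hu
      · exact h
    exact hB ⟨hu', hw'⟩
  have hw' : w' ≠ 0 := by
    rintro rfl
    have : u' * w = 0 := by linear_combination h1
    rcases mul_eq_zero.1 this with h | h
    · exact hB ⟨h, rfl⟩
    · exact hw h
  have hQ : t * (u * w) - u * u - w * w = 0 := by
    have : w' * (t * (u * w) - u * u - w * w) = 0 := by
      linear_combination w * h2 - (t * w - u) * h1
    rcases mul_eq_zero.1 this with h | h
    · exact absurd h hw'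
    · exact h
  refine ⟨u / w, ?_, ?_, ?_⟩
  · field_simp
    linear_combination (-1) * hQ
  · field_simp
  · field_simp
    linear_combination h1

-- chunk 4
lemma comm_of_uw {t : ℂ} (A : SL(2,ℂ)) (h1 : uu A = 0) (h2 : ww t A = 0) :
    A * Kt t = Kt t * A := by
  unfold uu at h1; unfold ww at h2
  refine Sxy_comm A (x := (A : M2) 0 0) (y := (A : M2) 1 0) ?_
  have e1 : (A : M2) 0 1 = -((A : M2) 1 0) := by linear_combination h1
  have e2 : (A : M2) 1 1 = (A : M2) 0 0 + (A : M2) 1 0 * t := by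
    linear_combination h2 - t * h1
  conv_lhs => rw [Matrix.eta_fin_two (A : M2), e1, e2]

lemma uw_of_comm {t : ℂ} (A : SL(2,ℂ)) (h : A * Kt t = Kt t * A) :
    uu A = 0 ∧ ww t A = 0 := by
  have hm : (A : M2) * !![0,-1;1,t] = !![0,-1;1,t] * (A : M2) := by
    have := congrArg (Subtype.val) h
    simpa [Matrix.SpecialLinearGroup.coe_mul] using this
  have e00 := congrFun (congrFun hm 0) 0
  have e01 := congrFun (congrFun hm 0) 1
  simp [Matrix.mul_apply, Fin.sum_univ_two] at e00 e01
  constructor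
  · unfold uu; linear_combination e00
  · unfold ww; linear_combination e01

lemma companion_E_iff (t : ℂ) (A B : SL(2,ℂ)) :
    (uu B * ww t A - uu A * ww t B = 0 ∧
      t * (uu B * ww t A) - uu A * uu B - ww t A * ww t B = 0) ↔
    (A * Kt t = Kt t * A ∨ B * Kt t = Kt t * B ∨
      ∃ v : Fin 2 → ℂ, v ≠ 0 ∧
        (∃ a : ℂ, Matrix.mulVec (A : M2) v = a • v) ∧
        (∃ b : ℂ, Matrix.mulVec (B : M2) v = b • v) ∧
        (∃ c : ℂ, Matrix.mulVec ((Kt t : SL(2,ℂ)) : M2) v = c • v)) := by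
  constructor
  · rintro ⟨h1, h2⟩
    by_cases hA : A * Kt t = Kt t * A
    · exact Or.inl hA
    by_cases hB : B * Kt t = Kt t * B
    · exact Or.inr (Or.inl hB)
    have hA' : ¬(uu A = 0 ∧ ww t A = 0) := fun ⟨ha, hb⟩ => hA (comm_of_uw A ha hb)
    have hB' : ¬(uu B = 0 ∧ ww t B = 0) := fun ⟨ha, hb⟩ => hB (comm_of_uw B ha hb)
    obtain ⟨γ, hγ, huA, huB⟩ := key h1 h2 hA' hB'
    refine Or.inr (Or.inr ⟨![1, -γ], ?_, ⟨(A : M2) 0 0 - (A : M2) 0 1 * γ, ?_⟩,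
      ⟨(B : M2) 0 0 - (B : M2) 0 1 * γ, ?_⟩, ⟨γ, ?_⟩⟩)
    · intro h
      have := congrFun h 0
      simp at this
    · unfold uu ww at huA
      funext i
      fin_cases i <;>
        simp [Matrix.mulVec, dotProduct, Fin.sum_univ_two]
      · ring
      · linear_combination huA - (A : M2) 0 1 * hγ
    · unfold uu ww at huB
      funext i
      fin_cases i <;>
        simp [Matrix.mulVec, dotProduct, Fin.sum_univ_two]
      · ring
      · linear_combination huB - (B : M2) 0 1 * hγ
    · funext i
      fin_cases i <;>
        simp [Matrix.mulVec, dotProduct, Fin.sum_univ_two]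
      · linear_combination hγ
  · rintro (hA | hB | ⟨v, hv, ⟨α, hα⟩, ⟨β, hβ⟩, ⟨γ, hγ⟩⟩)
    · obtain ⟨e1, e2⟩ := uw_of_comm A hA
      constructor
      · linear_combination uu B * e2 - ww t B * e1
      · linear_combination t * uu B * e2 - uu B * e1 - ww t B * e2
    · obtain ⟨e1, e2⟩ := uw_of_comm B hB
      constructor
      · linear_combination ww t A * e1 - uu A * e2
      · linear_combination t * ww t A * e1 - uu A * e1 - ww t A * e2
    · have k0 := congrFun hγ 0
      have k1 := congrFun hγ 1
      have a0 := congrFun hα 0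
      have a1 := congrFun hα 1
      have b0 := congrFun hβ 0
      have b1 := congrFun hβ 1
      simp only [Matrix.mulVec, dotProduct, Fin.sum_univ_two, Kt_coe,
        Matrix.of_apply, Matrix.cons_val', Matrix.cons_val_zero, Matrix.cons_val_one,
        Matrix.head_cons, Matrix.empty_val', Matrix.cons_val_fin_one, Matrix.head_fin_const,
        Pi.smul_apply, smul_eq_mul] at k0 k1 a0 a1 b0 b1
      have hv0 : v 0 ≠ 0 := by
        intro h0
        apply hv
        have h1' : v 1 = 0 := by linear_combination -k0 - γ * h0
        funext i
        fin_cases i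
        · exact h0
        · exact h1'
      have hγ2 : γ * γ = t * γ - 1 := by
        have hz : (γ * γ - (t * γ - 1)) * v 0 = 0 := by
          linear_combination (t - γ) * k0 + k1
        rcases mul_eq_zero.1 hz with h' | h'
        · linear_combination h'
        · exact absurd h' hv0
      have huA : uu A = γ * ww t A := by
        have hz : (uu A - γ * ww t A) * v 0 = 0 := by
          unfold uu ww
          linear_combination a1 + γ * a0 + ((A : M2) 1 1 - α + γ * (A : M2) 0 1) * k0
            + (A : M2) 0 1 * v 0 * hγ2
        rcases mul_eq_zero.1 hz with h' | h'
        · linear_combination h'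
        · exact absurd h' hv0
      have huB : uu B = γ * ww t B := by
        have hz : (uu B - γ * ww t B) * v 0 = 0 := by
          unfold uu ww
          linear_combination b1 + γ * b0 + ((B : M2) 1 1 - β + γ * (B : M2) 0 1) * k0
            + (B : M2) 0 1 * v 0 * hγ2
        rcases mul_eq_zero.1 hz with h' | h'
        · linear_combination h'
        · exact absurd h' hv0
      rw [huA, huB]
      constructor
      · ring
      · linear_combination (-(ww t A * ww t B)) * hγ2
-- chunk 5
lemma trace_conj_inv (g X : SL(2,ℂ)) :
    Matrix.trace ((g⁻¹ * X * g : SL(2,ℂ)) : M2) = Matrix.trace ((X : SL(2,ℂ)) : M2) := by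
  simp only [Matrix.SpecialLinearGroup.coe_mul]
  rw [Matrix.trace_mul_cycle, ← Matrix.SpecialLinearGroup.coe_mul,
    mul_inv_cancel, Matrix.SpecialLinearGroup.coe_one, Matrix.one_mul]

lemma conj_of_vec (C : SL(2,ℂ)) (v0 v1 : ℂ)
    (hδ : v0 * ((C : M2) 1 0 * v0 + (C : M2) 1 1 * v1)
        - v1 * ((C : M2) 0 0 * v0 + (C : M2) 0 1 * v1) ≠ 0) :
    ∃ g : SL(2,ℂ), g⁻¹ * C * g = Kt (Matrix.trace (C : M2)) := by
  have hdetC := detSL C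
  set w0 := (C : M2) 0 0 * v0 + (C : M2) 0 1 * v1 with hw0
  set w1 := (C : M2) 1 0 * v0 + (C : M2) 1 1 * v1 with hw1
  obtain ⟨s, hs⟩ := IsAlgClosed.exists_pow_nat_eq (v0 * w1 - v1 * w0) (by norm_num : 0 < 2)
  have hs0 : s ≠ 0 := by
    intro h; rw [h] at hs; apply hδ; rw [← hs]; ring
  have hdet : Matrix.det !![v0/s, w0/s; v1/s, w1/s] = 1 := by
    rw [Matrix.det_fin_two_of]
    field_simp
    linear_combination -hs
  refine ⟨⟨!![v0/s, w0/s; v1/s, w1/s], hdet⟩, ?_⟩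
  set g : SL(2,ℂ) := ⟨!![v0/s, w0/s; v1/s, w1/s], hdet⟩ with hgdef
  have hCg : C * g = g * Kt (Matrix.trace (C : M2)) := by
    apply Subtype.ext
    show (C : M2) * (g : M2) = (g : M2) * (Kt _ : M2)
    have hgc : (g : M2) = !![v0/s, w0/s; v1/s, w1/s] := rfl
    rw [hgc, Kt_coe, Matrix.trace_fin_two]
    ext i j
    fin_cases i <;> fin_cases j <;>
      simp only [Matrix.mul_apply, Fin.sum_univ_two, Matrix.of_apply, Matrix.cons_val',
        Matrix.cons_val_zero, Matrix.cons_val_one, Matrix.head_cons, Matrix.empty_val',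
        Matrix.cons_val_fin_one, Matrix.head_fin_const, Fin.zero_eta, Fin.mk_one, Fin.isValue] <;> field_simp
    · ring
    · linear_combination (-v0) * hdetC
    · simp only [hw1]; ring
    · simp only [hw0, hw1]; linear_combination (-v1) * hdetC
  calc g⁻¹ * C * g = g⁻¹ * (C * g) := by rw [mul_assoc]
    _ = g⁻¹ * (g * Kt _) := by rw [hCg]
    _ = Kt _ := by rw [← mul_assoc, inv_mul_cancel, one_mul]

lemma exists_conj (C : SL(2,ℂ)) (h1 : (C : M2) ≠ 1) (h2 : (C : M2) ≠ -1) :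
    ∃ g : SL(2,ℂ), g⁻¹ * C * g = Kt (Matrix.trace (C : M2)) := by
  by_cases hr : (C : M2) 1 0 ≠ 0
  · apply conj_of_vec C 1 0
    simpa using hr
  by_cases hq : (C : M2) 0 1 ≠ 0
  · apply conj_of_vec C 0 1
    simpa using hq
  push_neg at hr hq
  have hdetC := detSL C
  have hps : (C : M2) 0 0 ≠ (C : M2) 1 1 := by
    intro h
    rw [hq, hr] at hdetC
    have h00 : (C : M2) 0 0 * (C : M2) 0 0 = 1 := by linear_combination hdetC + (C:M2) 0 0 * h
    have : ((C : M2) 0 0 - 1) * ((C : M2) 0 0 + 1) = 0 := by linear_combination h00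
    rcases mul_eq_zero.1 this with h' | h'
    · apply h1
      rw [Matrix.eta_fin_two (C : M2), hq, hr, ← h, Matrix.one_fin_two]
      have : (C : M2) 0 0 = 1 := by linear_combination h'
      rw [this]
    · apply h2
      rw [Matrix.eta_fin_two (C : M2), hq, hr, ← h]
      have : (C : M2) 0 0 = -1 := by linear_combination h'
      rw [this]
      ext i j
      fin_cases i <;> fin_cases j <;> simp
  apply conj_of_vec C 1 1
  rw [hq, hr]
  intro h
  apply hps
  linear_combination -h

lemma conj_eq_iff (g X Y : SL(2,ℂ)) : g⁻¹ * X * g = g⁻¹ * Y * g ↔ X = Y := by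
  constructor
  · intro h
    exact mul_left_cancel (mul_right_cancel h)
  · intro h; rw [h]

lemma mulVec_ne (g : SL(2,ℂ)) {v : Fin 2 → ℂ} (hv : v ≠ 0) :
    Matrix.mulVec (g : M2) v ≠ 0 := by
  intro h
  apply hv
  have : Matrix.mulVec ((g⁻¹ : SL(2,ℂ)) : M2) (Matrix.mulVec (g : M2) v) = 0 := by
    rw [h]; simp [Matrix.mulVec_zero]
  rwa [Matrix.mulVec_mulVec, ← Matrix.SpecialLinearGroup.coe_mul, inv_mul_cancel,
    Matrix.SpecialLinearGroup.coe_one, Matrix.one_mulVec] at this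

lemma eig_conj (g M : SL(2,ℂ)) (v : Fin 2 → ℂ) (a : ℂ)
    (h : Matrix.mulVec (M : M2) v = a • v) :
    Matrix.mulVec ((g⁻¹ * M * g : SL(2,ℂ)) : M2)
      (Matrix.mulVec ((g⁻¹ : SL(2,ℂ)) : M2) v)
    = a • Matrix.mulVec ((g⁻¹ : SL(2,ℂ)) : M2) v := by
  simp only [Matrix.SpecialLinearGroup.coe_mul, Matrix.mulVec_mulVec]
  have : ((g⁻¹ : SL(2,ℂ)) : M2) * (M : M2) * (g : M2) * ((g⁻¹ : SL(2,ℂ)) : M2)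
      = ((g⁻¹ : SL(2,ℂ)) : M2) * (M : M2) := by
    rw [Matrix.mul_assoc, ← Matrix.SpecialLinearGroup.coe_mul g g⁻¹, mul_inv_cancel,
      Matrix.SpecialLinearGroup.coe_one, Matrix.mul_one]
  rw [this, ← Matrix.mulVec_mulVec, h, Matrix.mulVec_smul]

lemma nonscalar_iff (A B C : SL(2,ℂ)) (h1 : (C : M2) ≠ 1) (h2 : (C : M2) ≠ -1) :
    (∀ S : SL(2,ℂ), S * C = C * S →
      Matrix.trace ((A * S * B * S⁻¹ : SL(2,ℂ)) : M2) =
        Matrix.trace ((A * B : SL(2,ℂ)) : M2)) ↔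
    (A * C = C * A ∨ B * C = C * B ∨
      ∃ v : Fin 2 → ℂ, v ≠ 0 ∧
        (∃ a : ℂ, Matrix.mulVec (A : M2) v = a • v) ∧
        (∃ b : ℂ, Matrix.mulVec (B : M2) v = b • v) ∧
        (∃ c : ℂ, Matrix.mulVec (C : M2) v = c • v)) := by
  obtain ⟨g, hg⟩ := exists_conj C h1 h2
  set t := Matrix.trace (C : M2) with ht
  set A' := g⁻¹ * A * g with hA'
  set B' := g⁻¹ * B * g with hB'
  have hK : Kt t = g⁻¹ * C * g := hg.symm
  have hC : C = g * Kt t * g⁻¹ := by rw [hK]; group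
  have step1 : (∀ S : SL(2,ℂ), S * C = C * S →
      Matrix.trace ((A * S * B * S⁻¹ : SL(2,ℂ)) : M2) =
        Matrix.trace ((A * B : SL(2,ℂ)) : M2)) ↔
      (∀ S : SL(2,ℂ), S * Kt t = Kt t * S →
      Matrix.trace ((A' * S * B' * S⁻¹ : SL(2,ℂ)) : M2) =
        Matrix.trace ((A' * B' : SL(2,ℂ)) : M2)) := by
    constructor
    · intro H S hS
      have hS' : (g * S * g⁻¹) * C = C * (g * S * g⁻¹) := by
        rw [hC]
        calc g * S * g⁻¹ * (g * Kt t * g⁻¹) = g * (S * Kt t) * g⁻¹ := by group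
          _ = g * (Kt t * S) * g⁻¹ := by rw [hS]
          _ = g * Kt t * g⁻¹ * (g * S * g⁻¹) := by group
      have h := H (g * S * g⁻¹) hS'
      have e1 : A' * S * B' * S⁻¹ = g⁻¹ * (A * (g * S * g⁻¹) * B * (g * S * g⁻¹)⁻¹) * g := by
        rw [hA', hB']; group
      have e2 : A' * B' = g⁻¹ * (A * B) * g := by rw [hA', hB']; group
      rw [e1, trace_conj_inv, e2, trace_conj_inv, h]
    · intro H S hS
      have hS' : (g⁻¹ * S * g) * Kt t = Kt t * (g⁻¹ * S * g) := by
        rw [hK]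
        calc g⁻¹ * S * g * (g⁻¹ * C * g) = g⁻¹ * (S * C) * g := by group
          _ = g⁻¹ * (C * S) * g := by rw [hS]
          _ = g⁻¹ * C * g * (g⁻¹ * S * g) := by group
      have h := H (g⁻¹ * S * g) hS'
      have e1 : A' * (g⁻¹ * S * g) * B' * (g⁻¹ * S * g)⁻¹ = g⁻¹ * (A * S * B * S⁻¹) * g := by
        rw [hA', hB']; group
      have e2 : A' * B' = g⁻¹ * (A * B) * g := by rw [hA', hB']; group
      rw [e1, trace_conj_inv, e2, trace_conj_inv] at h
      exact h
  have step2 := (companion_iff_E t A' B').trans (companion_E_iff t A' B')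
  rw [step1, step2]
  have iffA : A' * Kt t = Kt t * A' ↔ A * C = C * A := by
    have eA : A' * Kt t = g⁻¹ * (A * C) * g := by rw [hA', hK]; group
    have eA2 : Kt t * A' = g⁻¹ * (C * A) * g := by rw [hA', hK]; group
    rw [eA, eA2, conj_eq_iff]
  have iffB : B' * Kt t = Kt t * B' ↔ B * C = C * B := by
    have eB : B' * Kt t = g⁻¹ * (B * C) * g := by rw [hB', hK]; group
    have eB2 : Kt t * B' = g⁻¹ * (C * B) * g := by rw [hB', hK]; group
    rw [eB, eB2, conj_eq_iff]
  have iffV : (∃ v : Fin 2 → ℂ, v ≠ 0 ∧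
        (∃ a : ℂ, Matrix.mulVec (A' : M2) v = a • v) ∧
        (∃ b : ℂ, Matrix.mulVec (B' : M2) v = b • v) ∧
        (∃ c : ℂ, Matrix.mulVec ((Kt t : SL(2,ℂ)) : M2) v = c • v)) ↔
      (∃ v : Fin 2 → ℂ, v ≠ 0 ∧
        (∃ a : ℂ, Matrix.mulVec (A : M2) v = a • v) ∧
        (∃ b : ℂ, Matrix.mulVec (B : M2) v = b • v) ∧
        (∃ c : ℂ, Matrix.mulVec (C : M2) v = c • v)) := by
    constructor
    · rintro ⟨v, hv, ⟨a, ha⟩, ⟨b, hb⟩, ⟨c, hc⟩⟩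
      refine ⟨Matrix.mulVec ((g : SL(2,ℂ)) : M2) v, mulVec_ne g hv, ⟨a, ?_⟩, ⟨b, ?_⟩, ⟨c, ?_⟩⟩
      · have h := eig_conj g⁻¹ A' v a ha
        rw [inv_inv] at h
        rwa [show g * A' * g⁻¹ = A from by rw [hA']; group] at h
      · have h := eig_conj g⁻¹ B' v b hb
        rw [inv_inv] at h
        rwa [show g * B' * g⁻¹ = B from by rw [hB']; group] at h
      · have h := eig_conj g⁻¹ (Kt t) v c hc
        rw [inv_inv] at h
        rwa [show g * Kt t * g⁻¹ = C from hC.symm] at h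
    · rintro ⟨v, hv, ⟨a, ha⟩, ⟨b, hb⟩, ⟨c, hc⟩⟩
      refine ⟨Matrix.mulVec ((g⁻¹ : SL(2,ℂ)) : M2) v, mulVec_ne g⁻¹ hv,
        ⟨a, ?_⟩, ⟨b, ?_⟩, ⟨c, ?_⟩⟩
      · have h := eig_conj g A v a ha
        rwa [← hA'] at h
      · have h := eig_conj g B v b hb
        rwa [← hB'] at h
      · have h := eig_conj g C v c hc
        rwa [← hK] at h
  exact or_congr iffA (or_congr iffB iffV)


lemma trace_SBSinv (S B : SL(2,ℂ)) :
    Matrix.trace ((S : M2) * (B : M2) * ((S⁻¹ : SL(2,ℂ)) : M2)) = Matrix.trace (B : M2) := by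
  rw [Matrix.trace_mul_cycle, ← Matrix.SpecialLinearGroup.coe_mul,
    inv_mul_cancel, Matrix.SpecialLinearGroup.coe_one, Matrix.one_mul]

lemma scalar_back (A B S : SL(2,ℂ))
    (h : (A : M2) = 1 ∨ (A : M2) = -1 ∨ (B : M2) = 1 ∨ (B : M2) = -1) :
    Matrix.trace ((A * S * B * S⁻¹ : SL(2,ℂ)) : M2) =
      Matrix.trace ((A * B : SL(2,ℂ)) : M2) := by
  have hSS : (S : M2) * ((S⁻¹ : SL(2,ℂ)) : M2) = 1 := by
    rw [← Matrix.SpecialLinearGroup.coe_mul, mul_inv_cancel, Matrix.SpecialLinearGroup.coe_one]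
  simp only [Matrix.SpecialLinearGroup.coe_mul]
  rcases h with h | h | h | h
  · rw [h, one_mul, one_mul, trace_SBSinv]
  · rw [h, neg_one_mul, neg_mul, neg_mul, neg_one_mul, Matrix.trace_neg, Matrix.trace_neg,
      trace_SBSinv]
  · simp only [h, mul_one, mul_assoc, hSS]
  · simp only [h, mul_neg, neg_mul, mul_one, Matrix.trace_neg, mul_assoc, hSS]

def mkSL (m : M2) (hm : m.det = 1) : SL(2,ℂ) := ⟨m, hm⟩
@[simp] lemma mkSL_coe (m : M2) (hm : m.det = 1) : ((mkSL m hm : SL(2,ℂ)) : M2) = m := rfl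

lemma scalar_forward (A B : SL(2,ℂ))
    (H : ∀ S : SL(2,ℂ), Matrix.trace ((A * S * B * S⁻¹ : SL(2,ℂ)) : M2) =
      Matrix.trace ((A * B : SL(2,ℂ)) : M2)) :
    (A : M2) = 1 ∨ (A : M2) = -1 ∨ (B : M2) = 1 ∨ (B : M2) = -1 := by
  have hdA := detSL A
  have hdB := detSL B
  have expand : ∀ (m : M2) (hm : m.det = 1),
      Matrix.trace ((A * mkSL m hm * B * (mkSL m hm)⁻¹ : SL(2,ℂ)) : M2) =
        Matrix.trace ((A * B : SL(2,ℂ)) : M2) := fun m hm => H (mkSL m hm)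
  have t1 := expand !![1,1;0,1] (by norm_num [Matrix.det_fin_two_of])
  have t2 := expand !![1,-1;0,1] (by norm_num [Matrix.det_fin_two_of])
  have t3 := expand !![1,0;1,1] (by norm_num [Matrix.det_fin_two_of])
  have t4 := expand !![1,0;-1,1] (by norm_num [Matrix.det_fin_two_of])
  have t5 := expand !![2,0;0,(1/2 : ℂ)] (by norm_num [Matrix.det_fin_two_of])
  have t6 := expand !![3,0;0,(1/3 : ℂ)] (by norm_num [Matrix.det_fin_two_of])
  have t7 := expand !![1,1;1,2] (by norm_num [Matrix.det_fin_two_of])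
  simp only [Matrix.SpecialLinearGroup.coe_mul, Matrix.SpecialLinearGroup.coe_inv,
    Matrix.adjugate_fin_two, Matrix.trace_fin_two, Matrix.mul_apply, Fin.sum_univ_two,
    mkSL_coe, Matrix.of_apply, Matrix.cons_val', Matrix.cons_val_zero, Matrix.cons_val_one,
    Matrix.head_cons, Matrix.empty_val', Matrix.cons_val_fin_one,
    Matrix.head_fin_const] at t1 t2 t3 t4 t5 t6 t7
  have e_cg : (A : M2) 1 0 * (B : M2) 1 0 = 0 := by linear_combination (-1/2) * t1 - (1/2) * t2
  have e_P : (A : M2) 0 0 * (B : M2) 1 0 - (A : M2) 1 1 * (B : M2) 1 0 + (A : M2) 1 0 * (B : M2) 1 1 - (A : M2) 1 0 * (B : M2) 0 0 = 0 := by linear_combination (1/2) * t1 - (1/2) * t2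
  have e_bf : (A : M2) 0 1 * (B : M2) 0 1 = 0 := by linear_combination (-1/2) * t3 - (1/2) * t4
  have e_Q : (A : M2) 1 1 * (B : M2) 0 1 - (A : M2) 0 1 * (B : M2) 1 1 + (A : M2) 0 1 * (B : M2) 0 0 - (A : M2) 0 0 * (B : M2) 0 1 = 0 := by linear_combination (1/2) * t3 - (1/2) * t4
  have c5 : -(3/4) * ((A : M2) 0 1 * (B : M2) 1 0) + 3 * ((A : M2) 1 0 * (B : M2) 0 1) = 0 := by linear_combination t5
  have c6 : -(8/9) * ((A : M2) 0 1 * (B : M2) 1 0) + 8 * ((A : M2) 1 0 * (B : M2) 0 1) = 0 := by linear_combination t6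
  have e_bg : (A : M2) 0 1 * (B : M2) 1 0 = 0 := by linear_combination (-12/5) * c5 + (9/10) * c6
  have e_cf : (A : M2) 1 0 * (B : M2) 0 1 = 0 := by linear_combination (-4/15) * c5 + (9/40) * c6
  -- case analysis
  have main : ((A : M2) 0 1 = 0 ∧ (A : M2) 1 0 = 0 ∧ (A : M2) 0 0 = (A : M2) 1 1) ∨ ((B : M2) 0 1 = 0 ∧ (B : M2) 1 0 = 0 ∧ (B : M2) 0 0 = (B : M2) 1 1) := by
    by_cases hb : (A : M2) 0 1 = 0
    · by_cases hc : (A : M2) 1 0 = 0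
      · by_cases had : (A : M2) 0 0 = (A : M2) 1 1
        · exact Or.inl ⟨hb, hc, had⟩
        · right
          have hg : (B : M2) 1 0 = 0 := by
            have : (B : M2) 1 0 * ((A : M2) 0 0 - (A : M2) 1 1) = 0 := by linear_combination e_P - (B : M2) 1 1 * hc + (B : M2) 0 0 * hc
            rcases mul_eq_zero.1 this with h' | h'
            · exact h'
            · exact absurd (by linear_combination h') had
          have hf : (B : M2) 0 1 = 0 := by
            have : (B : M2) 0 1 * ((A : M2) 1 1 - (A : M2) 0 0) = 0 := by linear_combination e_Q + (B : M2) 1 1 * hb - (B : M2) 0 0 * hb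
            rcases mul_eq_zero.1 this with h' | h'
            · exact h'
            · exact absurd (by linear_combination -h') had
          refine ⟨hf, hg, ?_⟩
          rw [hb, hc, hf, hg] at t7
          have : ((A : M2) 0 0 - (A : M2) 1 1) * ((B : M2) 0 0 - (B : M2) 1 1) = 0 := by linear_combination t7
          rcases mul_eq_zero.1 this with h' | h'
          · exact absurd (by linear_combination h') had
          · linear_combination h'
      · right
        have hg : (B : M2) 1 0 = 0 := by
          rcases mul_eq_zero.1 e_cg with h' | h'
          · exact absurd h' hc
          · exact h'
        have hf : (B : M2) 0 1 = 0 := by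
          rcases mul_eq_zero.1 e_cf with h' | h'
          · exact absurd h' hc
          · exact h'
        refine ⟨hf, hg, ?_⟩
        have : (A : M2) 1 0 * ((B : M2) 1 1 - (B : M2) 0 0) = 0 := by linear_combination e_P - (A : M2) 0 0 * hg + (A : M2) 1 1 * hg
        rcases mul_eq_zero.1 this with h' | h'
        · exact absurd h' hc
        · linear_combination -h'
    · right
      have hf : (B : M2) 0 1 = 0 := by
        rcases mul_eq_zero.1 e_bf with h' | h'
        · exact absurd h' hb
        · exact h'
      have hg : (B : M2) 1 0 = 0 := by
        rcases mul_eq_zero.1 e_bg with h' | h'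
        · exact absurd h' hb
        · exact h'
      refine ⟨hf, hg, ?_⟩
      have : (A : M2) 0 1 * ((B : M2) 0 0 - (B : M2) 1 1) = 0 := by linear_combination e_Q - (A : M2) 1 1 * hf + (A : M2) 0 0 * hf
      rcases mul_eq_zero.1 this with h' | h'
      · exact absurd h' hb
      · linear_combination h'
  rcases main with ⟨h1, h2, h3⟩ | ⟨h1, h2, h3⟩
  · have ha : (A : M2) 0 0 * (A : M2) 0 0 = 1 := by linear_combination hdA + (A : M2) 0 0 * h3 + (A : M2) 1 0 * h1
    have : ((A : M2) 0 0 - 1) * ((A : M2) 0 0 + 1) = 0 := by linear_combination ha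
    rcases mul_eq_zero.1 this with h' | h'
    · left
      rw [Matrix.eta_fin_two (A : M2), h1, h2, ← h3,
        show (A : M2) 0 0 = 1 from by linear_combination h', Matrix.one_fin_two]
    · right; left
      rw [Matrix.eta_fin_two (A : M2), h1, h2, ← h3,
        show (A : M2) 0 0 = -1 from by linear_combination h']
      ext i j; fin_cases i <;> fin_cases j <;> simp
  · have he : (B : M2) 0 0 * (B : M2) 0 0 = 1 := by linear_combination hdB + (B : M2) 0 0 * h3 + (B : M2) 1 0 * h1
    have : ((B : M2) 0 0 - 1) * ((B : M2) 0 0 + 1) = 0 := by linear_combination he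
    rcases mul_eq_zero.1 this with h' | h'
    · right; right; left
      rw [Matrix.eta_fin_two (B : M2), h1, h2, ← h3,
        show (B : M2) 0 0 = 1 from by linear_combination h', Matrix.one_fin_two]
    · right; right; right
      rw [Matrix.eta_fin_two (B : M2), h1, h2, ← h3,
        show (B : M2) 0 0 = -1 from by linear_combination h']
      ext i j; fin_cases i <;> fin_cases j <;> simp

end
end Stmt0Aux

open Stmt0Aux in
/-- For `A, B, C ∈ SL(2,ℂ)`, `trace (A S B S⁻¹) = trace (A B)` for every
`S ∈ SL(2,ℂ)` commuting with `C` if and only if either (a) `C = ±I` and one of `A, B` is `±I`,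
or (b) `C ≠ ±I` and either `A` commutes with `C`, or `B` commutes with `C`, or `A`, `B`, `C`
have a common eigenvector. -/
theorem stmt0 (A B C : Matrix.SpecialLinearGroup (Fin 2) ℂ) :
    (∀ S : Matrix.SpecialLinearGroup (Fin 2) ℂ, S * C = C * S →
      Matrix.trace ((A * S * B * S⁻¹ : Matrix.SpecialLinearGroup (Fin 2) ℂ) :
          Matrix (Fin 2) (Fin 2) ℂ) =
        Matrix.trace ((A * B : Matrix.SpecialLinearGroup (Fin 2) ℂ) :
          Matrix (Fin 2) (Fin 2) ℂ)) ↔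
    ((((C : Matrix (Fin 2) (Fin 2) ℂ) = 1 ∨ (C : Matrix (Fin 2) (Fin 2) ℂ) = -1) ∧
        ((A : Matrix (Fin 2) (Fin 2) ℂ) = 1 ∨ (A : Matrix (Fin 2) (Fin 2) ℂ) = -1 ∨
          (B : Matrix (Fin 2) (Fin 2) ℂ) = 1 ∨ (B : Matrix (Fin 2) (Fin 2) ℂ) = -1)) ∨
      (((C : Matrix (Fin 2) (Fin 2) ℂ) ≠ 1 ∧ (C : Matrix (Fin 2) (Fin 2) ℂ) ≠ -1) ∧
        (A * C = C * A ∨ B * C = C * B ∨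
          ∃ v : Fin 2 → ℂ, v ≠ 0 ∧
            (∃ a : ℂ, Matrix.mulVec (A : Matrix (Fin 2) (Fin 2) ℂ) v = a • v) ∧
            (∃ b : ℂ, Matrix.mulVec (B : Matrix (Fin 2) (Fin 2) ℂ) v = b • v) ∧
            (∃ c : ℂ, Matrix.mulVec (C : Matrix (Fin 2) (Fin 2) ℂ) v = c • v)))) := by
  by_cases hC1 : (C : M2) = 1
  · have hCone : C = 1 := Subtype.ext (by rw [Matrix.SpecialLinearGroup.coe_one]; exact hC1)
    have hcomm : ∀ S : Matrix.SpecialLinearGroup (Fin 2) ℂ, S * C = C * S := fun S => by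
      rw [hCone, mul_one, one_mul]
    constructor
    · intro H
      exact Or.inl ⟨Or.inl hC1, scalar_forward A B (fun S => H S (hcomm S))⟩
    · rintro (⟨-, hres⟩ | ⟨⟨hne, -⟩, -⟩)
      · exact fun S _ => scalar_back A B S hres
      · exact absurd hC1 hne
  · by_cases hC2 : (C : M2) = -1
    · have hcomm : ∀ S : Matrix.SpecialLinearGroup (Fin 2) ℂ, S * C = C * S := fun S => by
        apply Subtype.ext
        show (S : M2) * (C : M2) = (C : M2) * (S : M2)
        rw [hC2, mul_neg_one, neg_one_mul]
      constructor
      · intro H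
        exact Or.inl ⟨Or.inr hC2, scalar_forward A B (fun S => H S (hcomm S))⟩
      · rintro (⟨-, hres⟩ | ⟨⟨-, hne⟩, -⟩)
        · exact fun S _ => scalar_back A B S hres
        · exact absurd hC2 hne
    · rw [nonscalar_iff A B C hC1 hC2]
      constructor
      · intro hres
        exact Or.inr ⟨⟨hC1, hC2⟩, hres⟩
      · rintro (⟨hC, -⟩ | ⟨-, hres⟩)
        · rcases hC with hC | hC
          · exact absurd hC hC1
          · exact absurd hC hC2
        · exact hres
end

section
/- Let α₀, α₁, …, αₙ ∈ ℤ² be primitive vectors that are pairwise projectively distinct, and let L₁, …, Lₘ be subgroups of ℤ² none of which contains α₀. For each i = 1, …, n let Uᵢ ⊆ ℙ(ℝ²) be a closed proper subset containing the class [αᵢ], and suppose U₁, …, Uₙ are pairwise disjoint. Then there are infinitely many primitive vectors α ∈ ℤ² such that α ∉ L₁ ∪ … ∪ Lₘ and [α] ∉ U₁ ∪ … ∪ Uₙ. -/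
noncomputable section

private lemma detz_cramer (u w x : Fin 2 → ℤ) :
    (u 0 * w 1 - u 1 * w 0) • x = (x 0 * w 1 - x 1 * w 0) • u + (u 0 * x 1 - u 1 * x 0) • w := by
  apply funext
  rw [Fin.forall_fin_two]
  constructor <;>
    simp only [Pi.add_apply, Pi.smul_apply, smul_eq_mul] <;> ring

private lemma det_smul_mem (L : AddSubgroup (Fin 2 → ℤ)) {u w : Fin 2 → ℤ}
    (hu : u ∈ L) (hw : w ∈ L) (x : Fin 2 → ℤ) :
    (u 0 * w 1 - u 1 * w 0) • x ∈ L := by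
  rw [detz_cramer]
  exact L.add_mem (L.zsmul_mem hu _) (L.zsmul_mem hw _)

private lemma detr_cramer (A D v : Fin 2 → ℝ) (hAD : A 0 * D 1 - A 1 * D 0 = 1) :
    v = (v 0 * D 1 - v 1 * D 0) • A + (A 0 * v 1 - A 1 * v 0) • D := by
  apply funext
  rw [Fin.forall_fin_two]
  constructor <;> simp only [Pi.add_apply, Pi.smul_apply, smul_eq_mul]
  · linear_combination (-(v 0)) * hAD
  · linear_combination (-(v 1)) * hAD

private lemma parallel_of_det_eq_zero {A v : Fin 2 → ℝ} (hA : A ≠ 0)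
    (h : A 0 * v 1 - A 1 * v 0 = 0) : ∃ c : ℝ, v = c • A := by
  have hA' : A 0 ≠ 0 ∨ A 1 ≠ 0 := by
    by_contra hc
    push_neg at hc
    apply hA; apply funext; rw [Fin.forall_fin_two]; simp [hc.1, hc.2]
  rcases hA' with h0 | h1
  · refine ⟨v 0 / A 0, funext ?_⟩
    rw [Fin.forall_fin_two]
    constructor <;> simp only [Pi.smul_apply, smul_eq_mul]
    · field_simp
    · field_simp; nlinarith [h]
  · refine ⟨v 1 / A 1, funext ?_⟩
    rw [Fin.forall_fin_two]
    constructor <;> simp only [Pi.smul_apply, smul_eq_mul]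
    · field_simp; nlinarith [h]
    · field_simp

private lemma exists_b_pos (N : ℕ) (hN : 0 < N) (t ε : ℝ) (hε : 0 < ε) (ht : ε < t) :
    ∃ p₀ : ℕ, ∀ p : ℕ, p₀ < p → ∃ b : ℤ, ¬((p:ℤ) ∣ b) ∧ |(p:ℝ)/(N * b) - t| < ε := by
  have htε : 0 < t - ε := by linarith
  have htε' : 0 < t + ε := by linarith
  have hNr : (0:ℝ) < N := by exact_mod_cast hN
  set c₀ : ℝ := 1/(N*(t-ε)) - 1/(N*(t+ε)) with hc₀
  have hc₀pos : 0 < c₀ := by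
    rw [hc₀, sub_pos]
    apply one_div_lt_one_div_of_lt (by positivity)
    nlinarith
  refine ⟨max 1 ⌈3/c₀⌉₊, fun p hp => ?_⟩
  have hp1 : 1 < p := lt_of_le_of_lt (le_max_left _ _) hp
  have hppos : (0:ℝ) < p := by positivity
  have hpc : 3 < p * c₀ := by
    have h1 : (⌈3/c₀⌉₊ : ℝ) < p := by
      exact_mod_cast lt_of_le_of_lt (le_max_right 1 ⌈3/c₀⌉₊) hp
    have h3 : 3/c₀ ≤ (⌈3/c₀⌉₊:ℝ) := Nat.le_ceil _
    have h4 : 3/c₀ < (p:ℝ) := lt_of_le_of_lt h3 h1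
    calc (3:ℝ) = (3/c₀) * c₀ := by field_simp
    _ < p * c₀ := mul_lt_mul_of_pos_right h4 hc₀pos
  set A : ℝ := p / (N*(t+ε)) with hA
  set B : ℝ := p / (N*(t-ε)) with hB
  have hApos : 0 < A := by positivity
  have hBA : B - A = p * c₀ := by rw [hA, hB, hc₀]; field_simp
  have key : ∀ b : ℤ, A < b → (b:ℝ) < B → ¬((p:ℤ) ∣ b) →
      ¬((p:ℤ) ∣ b) ∧ |(p:ℝ)/(N * b) - t| < ε := by
    intro b hAb hbB hnd
    refine ⟨hnd, ?_⟩
    have hbpos : (0:ℝ) < b := lt_trans hApos hAb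
    have hNb : (0:ℝ) < N * b := by positivity
    have hub : (p:ℝ)/(N * b) < t + ε := by
      rw [div_lt_iff₀ hNb]
      have hA' : A * (N * (t+ε)) = p := by rw [hA]; field_simp
      nlinarith
    have hlb : t - ε < (p:ℝ)/(N * b) := by
      rw [lt_div_iff₀ hNb]
      have hB' : B * (N * (t-ε)) = p := by rw [hB]; field_simp
      nlinarith
    rw [abs_lt]
    constructor <;> linarith
  set b₁ : ℤ := ⌊A⌋ + 1 with hb₁
  have hAb₁ : A < b₁ := by rw [hb₁]; push_cast; exact Int.lt_floor_add_one A
  have hb₁A : (b₁:ℝ) ≤ A + 1 := by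
    rw [hb₁]; push_cast
    have := Int.floor_le A; linarith
  by_cases hd : (p:ℤ) ∣ b₁
  · refine ⟨b₁ + 1, key _ (by push_cast; linarith) (by push_cast; nlinarith) ?_⟩
    intro hd2
    have hdvd1 : (p:ℤ) ∣ 1 := by
      have := dvd_sub hd2 hd
      simpa using this
    have hple := Int.le_of_dvd one_pos hdvd1
    have : (2:ℤ) ≤ p := by exact_mod_cast hp1
    omega
  · exact ⟨b₁, key _ hAb₁ (by nlinarith) hd⟩

private lemma exists_b (N : ℕ) (hN : 0 < N) (t ε : ℝ) (hε : 0 < ε) (ht : ε < |t|) :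
    ∃ p₀ : ℕ, ∀ p : ℕ, p₀ < p → ∃ b : ℤ, ¬((p:ℤ) ∣ b) ∧ |(p:ℝ)/(N * b) - t| < ε := by
  rcases lt_trichotomy 0 t with hpos | hzero | hneg
  · exact exists_b_pos N hN t ε hε (by rwa [abs_of_pos hpos] at ht)
  · exfalso; rw [← hzero] at ht; simp at ht; linarith
  · obtain ⟨p₀, h⟩ := exists_b_pos N hN (-t) ε hε (by rwa [abs_of_neg hneg] at ht)
    refine ⟨p₀, fun p hp => ?_⟩
    obtain ⟨b, hb1, hb2⟩ := h p hp
    refine ⟨-b, fun hdd => hb1 ((dvd_neg).mp hdd), ?_⟩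
    have heq : (p:ℝ)/(N * ((-b : ℤ):ℝ)) - t = -((p:ℝ)/(N * b) - (-t)) := by
      push_cast; ring
    rw [heq, abs_neg]
    exact hb2

open LinearAlgebra.Projectivization

private lemma fne (A D : Fin 2 → ℝ) (hAD : A 0 * D 1 - A 1 * D 0 = 1) (t : ℝ) :
    t • A + D ≠ 0 := by
  intro h0
  have h1 : A 0 * (t • A + D) 1 - A 1 * (t • A + D) 0 = 1 := by
    simp only [Pi.add_apply, Pi.smul_apply, smul_eq_mul]
    linear_combination hAD
  rw [h0] at h1
  simp at h1

private lemma Ane (A D : Fin 2 → ℝ) (hAD : A 0 * D 1 - A 1 * D 0 = 1) : A ≠ 0 := by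
  intro h0
  rw [h0] at hAD
  simp at hAD

private lemma gne (A D : Fin 2 → ℝ) (hAD : A 0 * D 1 - A 1 * D 0 = 1) (s : ℝ) :
    A + s • D ≠ 0 := by
  intro h0
  have h1 : A 0 * (A + s • D) 1 - A 1 * (A + s • D) 0 = s := by
    simp only [Pi.add_apply, Pi.smul_apply, smul_eq_mul]
    linear_combination s * hAD
  rw [h0] at h1
  simp at h1
  rw [← h1] at h0
  simp at h0
  exact Ane A D hAD h0

/-- If all directions `[t•A + D]` lie in `U`, then `U` is everything. -/
private lemma univ_of_all_mem (A D : Fin 2 → ℝ) (hAD : A 0 * D 1 - A 1 * D 0 = 1)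
    (U : Set (ℙ ℝ (Fin 2 → ℝ))) (hU : IsClosed (Projectivization.mk' (K := ℝ) ⁻¹' U))
    (hall : ∀ t : ℝ, Projectivization.mk ℝ (t • A + D) (fne A D hAD t) ∈ U) :
    U = Set.univ := by
  have hA : A ≠ 0 := Ane A D hAD
  have step1 : ∀ (v : Fin 2 → ℝ) (hv : v ≠ 0), A 0 * v 1 - A 1 * v 0 ≠ 0 →
      Projectivization.mk ℝ v hv ∈ U := by
    intro v hv hy
    set y : ℝ := A 0 * v 1 - A 1 * v 0 with hydef
    set x : ℝ := v 0 * D 1 - v 1 * D 0 with hxdef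
    have hveq : v = y • ((x/y) • A + D) := by
      have h := detr_cramer A D v hAD
      rw [smul_add, smul_smul, mul_div_cancel₀ _ hy]
      rw [← hydef, ← hxdef] at h
      exact h
    have hmk : Projectivization.mk ℝ v hv
        = Projectivization.mk ℝ ((x/y) • A + D) (fne A D hAD (x/y)) := by
      rw [Projectivization.mk_eq_mk_iff']
      exact ⟨y, hveq.symm⟩
    rw [hmk]
    exact hall _
  have step2 : Projectivization.mk ℝ A hA ∈ U := by
    set h : ℝ → {v : Fin 2 → ℝ // v ≠ 0} := fun s => ⟨A + s • D, gne A D hAD s⟩ with hh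
    have hcont : Continuous h := by
      apply Continuous.subtype_mk
      exact continuous_const.add (continuous_id.smul continuous_const)
    have hmem : ∀ s : ℝ, s ≠ 0 → h s ∈ Projectivization.mk' (K := ℝ) ⁻¹' U := by
      intro s hs
      have hdet : A 0 * (A + s • D) 1 - A 1 * (A + s • D) 0 ≠ 0 := by
        have h1 : A 0 * (A + s • D) 1 - A 1 * (A + s • D) 0 = s := by
          simp only [Pi.add_apply, Pi.smul_apply, smul_eq_mul]
          linear_combination s * hAD
        rw [h1]; exact hs
      have := step1 (A + s • D) (gne A D hAD s) hdet
      simpa [Projectivization.mk'_eq_mk] using this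
    have htend : Filter.Tendsto h (nhdsWithin (0:ℝ) {0}ᶜ) (nhds (h 0)) :=
      ((hcont.tendsto 0).mono_left nhdsWithin_le_nhds)
    have hev : ∀ᶠ s in nhdsWithin (0:ℝ) {0}ᶜ, h s ∈ Projectivization.mk' (K := ℝ) ⁻¹' U :=
      eventually_nhdsWithin_of_forall (fun s hs => hmem s hs)
    have h0mem : h 0 ∈ Projectivization.mk' (K := ℝ) ⁻¹' U :=
      hU.mem_of_tendsto htend hev
    have hmm : Projectivization.mk ℝ (A + (0:ℝ) • D) (gne A D hAD 0) ∈ U := by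
      simpa [hh, Projectivization.mk'_eq_mk] using h0mem
    have heq : Projectivization.mk ℝ A hA
        = Projectivization.mk ℝ (A + (0:ℝ) • D) (gne A D hAD 0) := by
      rw [Projectivization.mk_eq_mk_iff']
      exact ⟨1, by simp⟩
    rw [heq]; exact hmm
  rw [Set.eq_univ_iff_forall]
  intro z
  induction z using Projectivization.ind with
  | h v hv =>
    by_cases hy : A 0 * v 1 - A 1 * v 0 = 0
    · obtain ⟨cc, hcc⟩ := parallel_of_det_eq_zero hA hy
      have hc0 : cc ≠ 0 := by
        intro h0; rw [h0, zero_smul] at hcc; exact hv hcc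
      have heq : Projectivization.mk ℝ v hv = Projectivization.mk ℝ A hA := by
        rw [Projectivization.mk_eq_mk_iff']
        exact ⟨cc, hcc.symm⟩
      rw [heq]; exact step2
    · exact step1 v hv hy
open LinearAlgebra.Projectivization in
/-- Let `α₀, α₁, …, αₙ ∈ ℤ²` be primitive, pairwise projectively distinct
vectors, `L₁, …, Lₘ ≤ ℤ²` subgroups not containing `α₀`, and `U₁, …, Uₙ ⊆ ℙ(ℝ²)` pairwise
disjoint closed proper subsets with `[αᵢ] ∈ Uᵢ`.  Then there are infinitely many primitive
`α ∈ ℤ²` with `α ∉ L₁ ∪ … ∪ Lₘ` and `[α] ∉ U₁ ∪ … ∪ Uₙ`. -/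
theorem stmt10 (n m : ℕ) (a : Fin (n + 1) → (Fin 2 → ℤ))
    (hprim : ∀ i, IsCoprime (a i 0) (a i 1))
    (hdist : ∀ i j : Fin (n + 1), i ≠ j →
      ∀ c : ℝ, (fun k => ((a i k : ℝ))) ≠ c • (fun k => ((a j k : ℝ))))
    (L : Fin m → AddSubgroup (Fin 2 → ℤ)) (hL : ∀ j, a 0 ∉ L j)
    (U : Fin n → Set (ℙ ℝ (Fin 2 → ℝ)))
    (hUclosed : ∀ i, IsClosed (Projectivization.mk' (K := ℝ) ⁻¹' U i))
    (hUproper : ∀ i, U i ≠ Set.univ)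
    (hUmem : ∀ (i : Fin n) (h : (fun k => ((a i.succ k : ℝ))) ≠ 0),
      Projectivization.mk ℝ (fun k => ((a i.succ k : ℝ))) h ∈ U i)
    (hUdisj : ∀ i j : Fin n, i ≠ j → Disjoint (U i) (U j)) :
    {α : Fin 2 → ℤ | IsCoprime (α 0) (α 1) ∧ (∀ j, α ∉ L j) ∧
      ∀ (h : (fun k => ((α k : ℝ))) ≠ 0) (i : Fin n),
        Projectivization.mk ℝ (fun k => ((α k : ℝ))) h ∉ U i}.Infinite := by
  classical
  -- Bezout completion of a 0 to a basis
  obtain ⟨uB, vB, huv⟩ := hprim 0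
  set δ : Fin 2 → ℤ := ![-vB, uB] with hδdef
  have hdet : a 0 0 * δ 1 - a 0 1 * δ 0 = 1 := by
    simp only [hδdef, Matrix.cons_val_one, Matrix.head_cons, Matrix.cons_val_zero]
    linear_combination huv
  set A : Fin 2 → ℝ := fun k => ((a 0 k : ℤ) : ℝ) with hAdef
  set D : Fin 2 → ℝ := fun k => ((δ k : ℤ) : ℝ) with hDdef
  have hADdet : A 0 * D 1 - A 1 * D 0 = 1 := by
    rw [hAdef, hDdef]
    push_cast
    exact_mod_cast hdet
  -- constants for the subgroups
  have hkex : ∀ j : Fin m, ∃ c : ℤ, c ≠ 0 ∧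
      ((∀ u ∈ L j, ∀ w ∈ L j, u 0 * w 1 - u 1 * w 0 = 0) ∨ (∀ x, c • x ∈ L j)) := by
    intro j
    by_cases hc : ∀ u ∈ L j, ∀ w ∈ L j, u 0 * w 1 - u 1 * w 0 = 0
    · exact ⟨1, one_ne_zero, Or.inl hc⟩
    · push_neg at hc
      obtain ⟨u, hu, w, hw, hne⟩ := hc
      exact ⟨_, hne, Or.inr (det_smul_mem (L j) hu hw)⟩
  choose c hc0 hcor using hkex
  set N : ℕ := (∏ j, c j).natAbs with hNdef
  have hNz0 : (∏ j, c j) ≠ 0 := Finset.prod_ne_zero_iff.mpr (fun j _ => hc0 j)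
  have hNpos : 0 < N := Int.natAbs_pos.mpr hNz0
  haveI : NeZero N := ⟨hNpos.ne'⟩
  have hNmem : ∀ j : Fin m, (∀ x, c j • x ∈ L j) → ∀ x : Fin 2 → ℤ, (N:ℤ) • x ∈ L j := by
    intro j hj x
    obtain ⟨r, hr⟩ := Finset.dvd_prod_of_mem c (Finset.mem_univ j)
    have hmem : (∏ j, c j) • x ∈ L j := by rw [hr, mul_smul]; exact hj _
    rcases Int.natAbs_eq (∏ j, c j) with h | h
    · rw [hNdef, ← h]; exact hmem
    · have h2 : ((N:ℕ):ℤ) = -(∏ j, c j) := by rw [hNdef]; omega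
      rw [h2, neg_smul]
      exact neg_mem hmem
  -- the direction curve
  set f : ℝ → (Fin 2 → ℝ) := fun t => t • A + D with hfdef
  have hfne : ∀ t, f t ≠ 0 := fun t => fne A D hADdet t
  set g : ℝ → {v : Fin 2 → ℝ // v ≠ 0} := fun t => ⟨f t, hfne t⟩ with hgdef
  have hgcont : Continuous g := by
    apply Continuous.subtype_mk
    exact (continuous_id.smul continuous_const).add continuous_const
  set W : Fin n → Set ℝ := fun i => g ⁻¹' (Projectivization.mk' (K := ℝ) ⁻¹' U i) with hWdef
  have hWclosed : ∀ i, IsClosed (W i) := fun i => (hUclosed i).preimage hgcont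
  have hWdisj : ∀ i j : Fin n, i ≠ j → Disjoint (W i) (W j) := by
    intro i j hij
    refine Set.disjoint_left.mpr fun t hti htj => ?_
    exact Set.disjoint_left.mp (hUdisj i j hij) hti htj
  -- nonzero casts
  have hacast_ne : ∀ i : Fin (n+1), (fun k => ((a i k : ℤ):ℝ)) ≠ 0 := by
    intro i h0
    have h00 : a i 0 = 0 := by
      have h := congrFun h0 0
      simp only [Pi.zero_apply] at h
      exact_mod_cast h
    have h01 : a i 1 = 0 := by
      have h := congrFun h0 1
      simp only [Pi.zero_apply] at h
      exact_mod_cast h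
    have hco := hprim i
    rw [h00, h01] at hco
    exact not_isCoprime_zero_zero hco
  -- each W i is nonempty
  have hWne : ∀ i : Fin n, ∃ t, t ∈ W i := by
    intro i
    set v : Fin 2 → ℝ := fun k => ((a i.succ k : ℤ):ℝ) with hvdef
    have hv : v ≠ 0 := hacast_ne i.succ
    have hy : A 0 * v 1 - A 1 * v 0 ≠ 0 := by
      intro h0
      obtain ⟨cc, hcc⟩ := parallel_of_det_eq_zero (Ane A D hADdet) h0
      exact hdist i.succ 0 (Fin.succ_ne_zero i) cc (by rw [hvdef, hAdef] at hcc; exact hcc)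
    refine ⟨(v 0 * D 1 - v 1 * D 0) / (A 0 * v 1 - A 1 * v 0), ?_⟩
    have hveq : v = (A 0 * v 1 - A 1 * v 0) •
        f ((v 0 * D 1 - v 1 * D 0) / (A 0 * v 1 - A 1 * v 0)) := by
      have h := detr_cramer A D v hADdet
      rw [hfdef]
      rw [smul_add, smul_smul, mul_div_cancel₀ _ hy]
      exact h
    have hft := congrArg (fun z => (A 0 * v 1 - A 1 * v 0)⁻¹ • z) hveq
    simp only [smul_smul, inv_mul_cancel₀ hy, one_smul] at hft
    show g _ ∈ Projectivization.mk' (K := ℝ) ⁻¹' U i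
    rw [Set.mem_preimage]
    have heq : Projectivization.mk' (K := ℝ) (g ((v 0 * D 1 - v 1 * D 0) / (A 0 * v 1 - A 1 * v 0)))
        = Projectivization.mk ℝ v hv := by
      rw [Projectivization.mk'_eq_mk, Projectivization.mk_eq_mk_iff']
      exact ⟨(A 0 * v 1 - A 1 * v 0)⁻¹, hft⟩
    rw [heq]
    exact hUmem i hv
  -- the good open set of parameters is nonempty
  have hGne : ∃ t : ℝ, ∀ i, t ∉ W i := by
    by_contra hG
    push_neg at hG
    rcases Nat.eq_zero_or_pos n with hn0 | hn
    · obtain ⟨i, -⟩ := hG 0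
      exact absurd i.2 (by omega)
    · set i₀ : Fin n := ⟨0, hn⟩ with hi₀
      set BB : Set ℝ := ⋃ i ∈ {i : Fin n | i ≠ i₀}, W i with hBBdef
      have hBBclosed : IsClosed BB :=
        Set.Finite.isClosed_biUnion (Set.toFinite _) (fun i _ => hWclosed i)
      have hcover : (Set.univ : Set ℝ) ⊆ W i₀ ∪ BB := by
        intro t _
        obtain ⟨i, hi⟩ := hG t
        by_cases hii : i = i₀
        · left; rwa [hii] at hi
        · right; exact Set.mem_biUnion hii hi
      have hdisjAB : Disjoint (W i₀) BB := by
        rw [Set.disjoint_left]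
        intro t ht htB
        obtain ⟨i, hi, hti⟩ := Set.mem_iUnion₂.mp htB
        exact Set.disjoint_left.mp (hWdisj i₀ i (Ne.symm hi)) ht hti
      rcases (isPreconnected_iff_subset_of_fully_disjoint_closed isClosed_univ).mp
          isPreconnected_univ (W i₀) BB (hWclosed i₀) hBBclosed hcover hdisjAB with hsub | hsub
      · apply hUproper i₀
        apply univ_of_all_mem A D hADdet (U i₀) (hUclosed i₀)
        intro t
        exact hsub (Set.mem_univ t)
      · obtain ⟨t, ht⟩ := hWne i₀
        have htB : t ∈ BB := hsub (Set.mem_univ t)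
        obtain ⟨i, hi, hti⟩ := Set.mem_iUnion₂.mp htB
        exact Set.disjoint_left.mp (hWdisj i₀ i (Ne.symm hi)) ht hti
  obtain ⟨t₀, ht₀⟩ := hGne
  have hGopen : IsOpen {t : ℝ | ∀ i, t ∉ W i} := by
    have hrw : {t : ℝ | ∀ i, t ∉ W i} = ⋂ i, (W i)ᶜ := by ext t; simp
    rw [hrw]
    exact isOpen_iInter_of_finite fun i => (hWclosed i).isOpen_compl
  obtain ⟨r, hr0, hball⟩ := Metric.isOpen_iff.mp hGopen t₀ ht₀
  have hkey : ∃ ts εs : ℝ, 0 < εs ∧ εs < |ts| ∧ ∀ u : ℝ, |u - ts| < εs → ∀ i, u ∉ W i := by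
    by_cases ht00 : t₀ = 0
    · refine ⟨r/2, r/4, by positivity, ?_, ?_⟩
      · rw [abs_of_pos (by positivity)]; linarith
      · intro u hu i
        have hmem : u ∈ Metric.ball t₀ r := by
          rw [Metric.mem_ball, Real.dist_eq, ht00, sub_zero]
        -- |u| ≤ |u - r/2| + |r/2|
          have h1 : |u| ≤ |u - r/2| + |r/2| := by
            have := abs_sub_abs_le_abs_sub u (r/2)
            have h2 := abs_add_le (u - r/2) (r/2)
            calc |u| = |(u - r/2) + r/2| := by ring_nf
            _ ≤ |u - r/2| + |r/2| := abs_add_le _ _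
          have h3 : |r/2| = r/2 := abs_of_pos (by positivity)
          rw [h3] at h1
          linarith
        exact hball hmem i
    · refine ⟨t₀, min (r/2) (|t₀|/2), ?_, ?_, ?_⟩
      · have hpos : 0 < |t₀| := abs_pos.mpr ht00
        positivity
      · have hpos : 0 < |t₀| := abs_pos.mpr ht00
        calc min (r/2) (|t₀|/2) ≤ |t₀|/2 := min_le_right _ _
        _ < |t₀| := by linarith
      · intro u hu i
        have hmem : u ∈ Metric.ball t₀ r := by
          rw [Metric.mem_ball, Real.dist_eq]
          calc |u - t₀| < min (r/2) (|t₀|/2) := hu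
          _ ≤ r/2 := min_le_left _ _
          _ < r := by linarith
        exact hball hmem i
  obtain ⟨ts, εs, hεs, htsεs, hGball⟩ := hkey
  obtain ⟨p₀, hp₀⟩ := exists_b N hNpos ts εs hεs htsεs
  set P : Set ℕ := {p : ℕ | p.Prime ∧ ((p:ℕ) : ZMod N) = 1 ∧ max p₀ 1 < p} with hPdef
  have hPinf : P.Infinite := by
    have h1 : {p : ℕ | p.Prime ∧ ((p:ℕ) : ZMod N) = (1 : ZMod N)}.Infinite :=
      Nat.infinite_setOfPred_prime_and_eq_mod isUnit_one
    apply Set.Infinite.mono (s := {p : ℕ | p.Prime ∧ ((p:ℕ) : ZMod N) = (1 : ZMod N)}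
        \ Set.Iic (max p₀ 1))
    · rintro p ⟨⟨hp1, hp2⟩, hp3⟩
      exact ⟨hp1, hp2, by simpa using hp3⟩
    · exact h1.diff (Set.finite_Iic _)
  have hbex : ∀ p : ℕ, p ∈ P → ∃ b : ℤ, ¬((p:ℤ) ∣ b) ∧ |(p:ℝ)/(N * b) - ts| < εs := by
    intro p hp
    exact hp₀ p (lt_of_le_of_lt (le_max_left _ _) hp.2.2)
  set b : ℕ → ℤ := fun p => if h : p ∈ P then (hbex p h).choose else 0 with hbdef
  have hb : ∀ p, p ∈ P → ¬((p:ℤ) ∣ b p) ∧ |(p:ℝ)/(N * (b p)) - ts| < εs := by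
    intro p hp
    rw [hbdef]
    simp only [dif_pos hp]
    exact (hbex p hp).choose_spec
  set F : ℕ → (Fin 2 → ℤ) := fun p => fun k => (p:ℤ) * a 0 k + (N:ℤ) * b p * δ k with hFdef
  have hFdet1 : ∀ p, F p 0 * δ 1 - F p 1 * δ 0 = (p:ℤ) := by
    intro p
    show ((p:ℤ) * a 0 0 + (N:ℤ) * b p * δ 0) * δ 1
      - ((p:ℤ) * a 0 1 + (N:ℤ) * b p * δ 1) * δ 0 = (p:ℤ)
    linear_combination (p:ℤ) * hdet
  have hFdet2 : ∀ p, a 0 0 * F p 1 - a 0 1 * F p 0 = (N:ℤ) * b p := by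
    intro p
    show a 0 0 * ((p:ℤ) * a 0 1 + (N:ℤ) * b p * δ 1)
      - a 0 1 * ((p:ℤ) * a 0 0 + (N:ℤ) * b p * δ 0) = (N:ℤ) * b p
    linear_combination ((N:ℤ) * b p) * hdet
  have hb0 : ∀ p, p ∈ P → b p ≠ 0 := by
    intro p hp h0
    exact (hb p hp).1 (by rw [h0]; exact dvd_zero _)
  have hNdvd : ∀ p, p ∈ P → (N:ℤ) ∣ (p:ℤ) - 1 := by
    intro p hp
    have h1 : (((p:ℤ) - 1 : ℤ) : ZMod N) = 0 := by
      push_cast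
      rw [hp.2.1]
      ring
    exact (ZMod.intCast_zmod_eq_zero_iff_dvd _ N).mp h1
  have hprime : ∀ p, p ∈ P → Prime (p:ℤ) := fun p hp => Nat.prime_iff_prime_int.mp hp.1
  have hpN : ∀ p, p ∈ P → ¬ (p:ℤ) ∣ (N:ℤ) * b p := by
    intro p hp hdvd
    rcases (hprime p hp).dvd_mul.mp hdvd with hdN | hdb
    · have h1 : (p:ℤ) ∣ (p:ℤ) - 1 := dvd_trans hdN (hNdvd p hp)
      have h2 : (p:ℤ) ∣ 1 := by
        have := dvd_sub (dvd_refl (p:ℤ)) h1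
        simpa using this
      exact (hprime p hp).not_dvd_one h2
    · exact (hb p hp).1 hdb
  have hcop : ∀ p, p ∈ P → IsCoprime (F p 0) (F p 1) := by
    intro p hp
    obtain ⟨x, y, hxy⟩ := ((hprime p hp).coprime_iff_not_dvd).mpr (hpN p hp)
    refine ⟨x * δ 1 - y * a 0 1, -(x * δ 0) + y * a 0 0, ?_⟩
    linear_combination x * hFdet1 p + y * hFdet2 p + hxy
  have hNbne : ∀ p, p ∈ P → ((N:ℝ) * ((b p : ℤ):ℝ)) ≠ 0 := by
    intro p hp
    exact mul_ne_zero (by exact_mod_cast hNpos.ne') (Int.cast_ne_zero.mpr (hb0 p hp))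
  have hFreal : ∀ p, p ∈ P →
      (fun k => ((F p k : ℤ) : ℝ)) = ((N:ℝ) * ((b p : ℤ):ℝ)) • f ((p:ℝ)/((N:ℝ) * ((b p:ℤ):ℝ))) := by
    intro p hp
    have h1 : ((N:ℕ):ℝ) ≠ 0 := by exact_mod_cast hNpos.ne'
    have h2 : ((b p : ℤ):ℝ) ≠ 0 := Int.cast_ne_zero.mpr (hb0 p hp)
    funext k
    simp only [hFdef, hfdef, Pi.smul_apply, Pi.add_apply, smul_eq_mul, hAdef, hDdef]
    push_cast
    field_simp
  have hFne : ∀ p, p ∈ P → (fun k => ((F p k : ℤ) : ℝ)) ≠ 0 := by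
    intro p hp
    rw [hFreal p hp]
    exact smul_ne_zero (hNbne p hp) (hfne _)
  have hFproj : ∀ p, p ∈ P → ∀ (h : (fun k => ((F p k : ℤ):ℝ)) ≠ 0) (i : Fin n),
      Projectivization.mk ℝ (fun k => ((F p k : ℤ):ℝ)) h ∉ U i := by
    intro p hp h i hmem
    have hts : ((p:ℝ)/((N:ℝ) * ((b p:ℤ):ℝ))) ∉ W i := hGball _ (hb p hp).2 i
    apply hts
    show g _ ∈ Projectivization.mk' (K := ℝ) ⁻¹' U i
    rw [Set.mem_preimage]
    have heq : Projectivization.mk ℝ (fun k => ((F p k:ℤ):ℝ)) h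
        = Projectivization.mk' (K := ℝ) (g ((p:ℝ)/((N:ℝ) * ((b p:ℤ):ℝ)))) := by
      rw [hgdef, Projectivization.mk'_eq_mk, Projectivization.mk_eq_mk_iff']
      exact ⟨(N:ℝ) * ((b p:ℤ):ℝ), (hFreal p hp).symm⟩
    rw [heq] at hmem
    exact hmem
  have hFL : ∀ p, p ∈ P → ∀ j, (∀ x, c j • x ∈ L j) → F p ∉ L j := by
    intro p hp j hj hmem
    obtain ⟨s, hs⟩ := hNdvd p hp
    have key : a 0 = F p - (N:ℤ) • (s • a 0 + (b p) • δ) := by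
      funext k
      simp only [hFdef, Pi.sub_apply, Pi.smul_apply, Pi.add_apply, smul_eq_mul]
      linear_combination (-(a 0 k)) * hs
    apply hL j
    rw [key]
    exact sub_mem hmem (hNmem j hj _)
  have hinj : Set.InjOn F P := by
    intro p hp q hq hpq
    have h1 := hFdet1 p
    have h2 := hFdet1 q
    rw [hpq] at h1
    have h3 : (p:ℤ) = (q:ℤ) := by rw [← h1, ← h2]
    exact_mod_cast h3
  have hcaseB : ∀ j, (∀ u ∈ L j, ∀ w ∈ L j, u 0 * w 1 - u 1 * w 0 = 0) →
      ∀ p, p ∈ P → ∀ q, q ∈ P → F p ∈ L j → F q ∈ L j → p = q := by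
    intro j hBj p hp q hq hpL hqL
    by_contra hpq
    have hdet0 : F p 0 * F q 1 - F p 1 * F q 0 = 0 := hBj _ hpL _ hqL
    have hcalc : F p 0 * F q 1 - F p 1 * F q 0 = (N:ℤ) * ((p:ℤ) * b q - (q:ℤ) * b p) := by
      show ((p:ℤ) * a 0 0 + (N:ℤ) * b p * δ 0) * ((q:ℤ) * a 0 1 + (N:ℤ) * b q * δ 1)
        - ((p:ℤ) * a 0 1 + (N:ℤ) * b p * δ 1) * ((q:ℤ) * a 0 0 + (N:ℤ) * b q * δ 0)
        = (N:ℤ) * ((p:ℤ) * b q - (q:ℤ) * b p)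
      linear_combination ((N:ℤ) * ((p:ℤ) * b q - (q:ℤ) * b p)) * hdet
    have hzero : (p:ℤ) * b q - (q:ℤ) * b p = 0 := by
      have hN0 : (N:ℤ) ≠ 0 := by exact_mod_cast hNpos.ne'
      have h4 : (N:ℤ) * ((p:ℤ) * b q - (q:ℤ) * b p) = 0 := by rw [← hcalc]; exact hdet0
      exact (mul_eq_zero.mp h4).resolve_left hN0
    have hdvd : (p:ℤ) ∣ (q:ℤ) * b p := ⟨b q, by linarith⟩
    rcases (hprime p hp).dvd_mul.mp hdvd with h | h
    · have h5 : (p:ℕ) ∣ q := by exact_mod_cast h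
      exact hpq ((Nat.prime_dvd_prime_iff_eq hp.1 hq.1).mp h5)
    · exact (hb p hp).1 h
  -- assembly
  set T : Set (Fin 2 → ℤ) := F '' P with hTdef
  have hTinf : T.Infinite := Set.Infinite.image hinj hPinf
  have hfin : ∀ j : Fin m, (T ∩ (L j : Set (Fin 2 → ℤ))).Finite := by
    intro j
    rcases hcor j with hBj | hAj
    · apply Set.Subsingleton.finite
      rintro x ⟨⟨p, hp, rfl⟩, hxL⟩ y ⟨⟨q, hq, rfl⟩, hyL⟩
      rw [hcaseB j hBj p hp q hq hxL hyL]
    · have hempty : T ∩ (L j : Set (Fin 2 → ℤ)) = ∅ := by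
        rw [Set.eq_empty_iff_forall_notMem]
        rintro x ⟨⟨p, hp, rfl⟩, hxL⟩
        exact hFL p hp j hAj hxL
      rw [hempty]
      exact Set.finite_empty
  have hBadfin : (T ∩ ⋃ j, (L j : Set (Fin 2 → ℤ))).Finite := by
    apply Set.Finite.subset (Set.finite_iUnion hfin)
    rintro x ⟨hxT, hxU⟩
    obtain ⟨j, hj⟩ := Set.mem_iUnion.mp hxU
    exact Set.mem_iUnion.mpr ⟨j, hxT, hj⟩
  apply Set.Infinite.mono (s := T \ (T ∩ ⋃ j, (L j : Set (Fin 2 → ℤ))))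
  · rintro x ⟨⟨p, hp, rfl⟩, hxB⟩
    refine ⟨hcop p hp, ?_, hFproj p hp⟩
    intro j hxL
    exact hxB ⟨⟨p, hp, rfl⟩, Set.mem_iUnion.mpr ⟨j, hxL⟩⟩
  · exact hTinf.diff hBadfin
end
end
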